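/- Fix an integer n ≥ 1. Let Ω ⊂ ℝⁿ be a bounded open set and let u : Ω → ℝ be measurable and locally essentially bounded (i.e., for every x ∈ Ω there is r > 0 with B_r(x) ⊂ Ω and u essentially bounded on B_r(x)). Then the following are equivalent: (i) there exists ũ ∈ C(Ω;ℝ) with ũ = u a.e. in Ω; (ii) for all real numbers t ≠ τ, ∂⁻{x ∈ Ω : u(x) ≥ t} ∩ ∂⁻{x ∈ Ω : u(x) ≥ τ} ∩ Ω = ∅. -/
import Mathlib


open MeasureTheory Filter
open scoped ENNReal NNReal

noncomputable section

/-- The measure-theoretic boundary `∂⁻E` of a set `E ⊆ ℝⁿ`. -/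
def mtBoundary (n : ℕ) (E : Set (EuclideanSpace ℝ (Fin n))) :
    Set (EuclideanSpace ℝ (Fin n)) :=
  {x | ∀ r : ℝ, 0 < r →
    0 < volume (E ∩ Metric.ball x r) ∧ volume (E ∩ Metric.ball x r) < volume (Metric.ball x r)}

namespace MtAux

variable {n : ℕ}

/-- levels `t` such that `u ≥ t` a.e. near `x` (within a ball contained in `Ω`). -/
def S (Ω : Set (EuclideanSpace ℝ (Fin n))) (u : EuclideanSpace ℝ (Fin n) → ℝ)
    (x : EuclideanSpace ℝ (Fin n)) : Set ℝ :=
  {t | ∃ r : ℝ, 0 < r ∧ Metric.ball x r ⊆ Ω ∧ volume ({y | u y < t} ∩ Metric.ball x r) = 0}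

def til (Ω : Set (EuclideanSpace ℝ (Fin n))) (u : EuclideanSpace ℝ (Fin n) → ℝ)
    (x : EuclideanSpace ℝ (Fin n)) : ℝ := sSup (S Ω u x)

lemma S_mono {Ω : Set (EuclideanSpace ℝ (Fin n))} {u : EuclideanSpace ℝ (Fin n) → ℝ}
    {x : EuclideanSpace ℝ (Fin n)} {t t' : ℝ} (h : t' ≤ t) (ht : t ∈ S Ω u x) :
    t' ∈ S Ω u x := by
  obtain ⟨r, hr, hrΩ, h0⟩ := ht
  refine ⟨r, hr, hrΩ, measure_mono_null ?_ h0⟩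
  exact Set.inter_subset_inter_left _ fun y hy => lt_of_lt_of_le hy h

lemma S_shrink {Ω : Set (EuclideanSpace ℝ (Fin n))} {u : EuclideanSpace ℝ (Fin n) → ℝ}
    {x : EuclideanSpace ℝ (Fin n)} {t : ℝ} (ht : t ∈ S Ω u x) {r' : ℝ} (hr' : 0 < r') :
    ∃ r : ℝ, 0 < r ∧ r ≤ r' ∧ Metric.ball x r ⊆ Ω ∧
      volume ({y | u y < t} ∩ Metric.ball x r) = 0 := by
  obtain ⟨r, hr, hrΩ, h0⟩ := ht
  refine ⟨min r r', lt_min hr hr', min_le_right _ _,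
    (Metric.ball_subset_ball (min_le_left _ _)).trans hrΩ,
    measure_mono_null (Set.inter_subset_inter_right _
      (Metric.ball_subset_ball (min_le_left _ _))) h0⟩

lemma S_props {Ω : Set (EuclideanSpace ℝ (Fin n))} {u : EuclideanSpace ℝ (Fin n) → ℝ}
    (hu : Measurable u)
    {x : EuclideanSpace ℝ (Fin n)} (hx : x ∈ Ω)
    (hl : ∃ r : ℝ, 0 < r ∧ Metric.ball x r ⊆ Ω ∧
      ∃ M : ℝ, ∀ᵐ y ∂(volume.restrict (Metric.ball x r)), |u y| ≤ M) :
    (S Ω u x).Nonempty ∧ BddAbove (S Ω u x) := by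
  obtain ⟨r0, hr0, hr0Ω, M, hM⟩ := hl
  have hMset : volume ({y | ¬ |u y| ≤ M} ∩ Metric.ball x r0) = 0 := by
    have h1 : (volume.restrict (Metric.ball x r0)) {y | ¬ |u y| ≤ M} = 0 := ae_iff.1 hM
    rw [Measure.restrict_apply] at h1
    · exact h1
    · have : MeasurableSet {y | |u y| ≤ M} := measurableSet_le hu.abs measurable_const
      exact this.compl
  constructor
  · refine ⟨-(M + 1), r0, hr0, hr0Ω, measure_mono_null ?_ hMset⟩
    rintro y ⟨hy1, hy2⟩
    refine ⟨fun h => ?_, hy2⟩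
    have : u y < -(M+1) := hy1
    have := neg_le_of_abs_le h
    linarith
  · refine ⟨M, fun t ht => ?_⟩
    by_contra hlt
    push_neg at hlt
    obtain ⟨r, hr, hrΩ, h0⟩ := ht
    set ρ := min r r0 with hρdef
    have hρ : 0 < ρ := lt_min hr hr0
    have hball : Metric.ball x ρ ⊆ ({y | u y < t} ∩ Metric.ball x r) ∪
        ({y | ¬ |u y| ≤ M} ∩ Metric.ball x r0) := by
      intro y hy
      by_cases hc : u y < t
      · exact Or.inl ⟨hc, Metric.ball_subset_ball (min_le_left _ _) hy⟩
      · refine Or.inr ⟨fun h => ?_, Metric.ball_subset_ball (min_le_right _ _) hy⟩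
        push_neg at hc
        have := le_of_abs_le h
        linarith
    have : volume (Metric.ball x ρ) = 0 :=
      measure_mono_null hball (measure_union_null h0 hMset)
    exact absurd this (Metric.measure_ball_pos volume x hρ).ne'

lemma mem_S_of_lt_til {Ω : Set (EuclideanSpace ℝ (Fin n))} {u : EuclideanSpace ℝ (Fin n) → ℝ}
    {x : EuclideanSpace ℝ (Fin n)} (hne : (S Ω u x).Nonempty) {t : ℝ} (ht : t < til Ω u x) :
    t ∈ S Ω u x := by
  obtain ⟨s, hs, hts⟩ := exists_lt_of_lt_csSup hne ht
  exact S_mono hts.le hs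

lemma le_til_of_mem_S {Ω : Set (EuclideanSpace ℝ (Fin n))} {u : EuclideanSpace ℝ (Fin n) → ℝ}
    {x : EuclideanSpace ℝ (Fin n)} (hbdd : BddAbove (S Ω u x)) {t : ℝ} (ht : t ∈ S Ω u x) :
    t ≤ til Ω u x := le_csSup hbdd ht

variable {Ω : Set (EuclideanSpace ℝ (Fin n))} {u : EuclideanSpace ℝ (Fin n) → ℝ}
  {x : EuclideanSpace ℝ (Fin n)}

/-- If `t > til x` then the upper strict inequality in the boundary condition holds
for every radius. -/
lemma Q_of_gt_til (hu : Measurable u) (hΩo : IsOpen Ω) (hx : x ∈ Ω)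
    (hbdd : BddAbove (S Ω u x)) {t : ℝ} (ht : til Ω u x < t) {R : ℝ} (hR : 0 < R) :
    volume ({y ∈ Ω | t ≤ u y} ∩ Metric.ball x R) < volume (Metric.ball x R) := by
  have htS : t ∉ S Ω u x := fun h => absurd (le_csSup hbdd h) (not_le.2 ht)
  obtain ⟨r0, hr0, hr0Ω⟩ := Metric.isOpen_iff.1 hΩo x hx
  set r := min r0 R with hrdef
  have hr : 0 < r := lt_min hr0 hR
  have hrΩ : Metric.ball x r ⊆ Ω := (Metric.ball_subset_ball (min_le_left _ _)).trans hr0Ω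
  have hb : volume ({y | u y < t} ∩ Metric.ball x r) ≠ 0 := by
    intro h0; exact htS ⟨r, hr, hrΩ, h0⟩
  set A := {y ∈ Ω | t ≤ u y} ∩ Metric.ball x R with hA
  set B := {y | u y < t} ∩ Metric.ball x r with hB
  have hdisj : Disjoint A B := by
    refine Set.disjoint_left.2 ?_
    rintro y ⟨⟨_, hy2⟩, _⟩ ⟨hy3, _⟩
    exact absurd hy2 (not_le.2 hy3)
  have hBm : MeasurableSet B :=
    (measurableSet_lt hu measurable_const).inter measurableSet_ball
  have hsub : A ∪ B ⊆ Metric.ball x R := by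
    rintro y (⟨_, hy⟩ | ⟨_, hy⟩)
    · exact hy
    · exact Metric.ball_subset_ball (min_le_right _ _) hy
  have hsum : volume A + volume B ≤ volume (Metric.ball x R) := by
    rw [← measure_union hdisj hBm]
    exact measure_mono hsub
  have hAfin : volume A ≠ ⊤ :=
    (lt_of_le_of_lt (measure_mono Set.inter_subset_right) measure_ball_lt_top).ne
  calc volume A < volume A + volume B := ENNReal.lt_add_right hAfin hb
    _ ≤ volume (Metric.ball x R) := hsum

/-- Key consequence of the disjoint-boundaries hypothesis: above `til x`, `u < t` a.e.
near `x`. -/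
lemma null_above_of_gt_til (hu : Measurable u) (hΩo : IsOpen Ω) (hx : x ∈ Ω)
    (hbdd : BddAbove (S Ω u x))
    (hyp : ∀ t τ : ℝ, t ≠ τ →
        mtBoundary n {x ∈ Ω | t ≤ u x} ∩ mtBoundary n {x ∈ Ω | τ ≤ u x} ∩ Ω = ∅)
    {t : ℝ} (ht : til Ω u x < t) :
    ∃ r : ℝ, 0 < r ∧ Metric.ball x r ⊆ Ω ∧ volume ({y | t ≤ u y} ∩ Metric.ball x r) = 0 := by
  by_contra hcon
  push_neg at hcon
  set t' := (til Ω u x + t) / 2 with ht'def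
  have ht'1 : til Ω u x < t' := by rw [ht'def]; linarith
  have ht'2 : t' < t := by rw [ht'def]; linarith
  have hP : ∀ s : ℝ, s ≤ t → ∀ R : ℝ, 0 < R →
      0 < volume ({y ∈ Ω | s ≤ u y} ∩ Metric.ball x R) := by
    intro s hs R hR
    obtain ⟨r0, hr0, hr0Ω⟩ := Metric.isOpen_iff.1 hΩo x hx
    set r := min r0 R with hrdef
    have hr : 0 < r := lt_min hr0 hR
    have hrΩ : Metric.ball x r ⊆ Ω := (Metric.ball_subset_ball (min_le_left _ _)).trans hr0Ω
    have hne := hcon r hr hrΩ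
    have hsub : {y | t ≤ u y} ∩ Metric.ball x r ⊆ {y ∈ Ω | s ≤ u y} ∩ Metric.ball x R := by
      rintro y ⟨hy1, hy2⟩
      exact ⟨⟨hrΩ hy2, le_trans hs hy1⟩, Metric.ball_subset_ball (min_le_right _ _) hy2⟩
    exact lt_of_lt_of_le (pos_iff_ne_zero.2 hne) (measure_mono hsub)
  have hxmem : x ∈ mtBoundary n {x ∈ Ω | t ≤ u x} ∩ mtBoundary n {x ∈ Ω | t' ≤ u x} ∩ Ω := by
    refine ⟨⟨fun R hR => ⟨hP t le_rfl R hR, Q_of_gt_til hu hΩo hx hbdd ht hR⟩,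
      fun R hR => ⟨hP t' ht'2.le R hR, Q_of_gt_til hu hΩo hx hbdd ht'1 hR⟩⟩, hx⟩
  rw [hyp t t' ht'2.ne'] at hxmem
  exact hxmem

section Main
variable (hu : Measurable u) (hΩo : IsOpen Ω)
  (hloc : ∀ x ∈ Ω, ∃ r : ℝ, 0 < r ∧ Metric.ball x r ⊆ Ω ∧
      ∃ M : ℝ, ∀ᵐ y ∂(volume.restrict (Metric.ball x r)), |u y| ≤ M)
  (hyp : ∀ t τ : ℝ, t ≠ τ →
        mtBoundary n {x ∈ Ω | t ≤ u x} ∩ mtBoundary n {x ∈ Ω | τ ≤ u x} ∩ Ω = ∅)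

include hu hΩo hloc hyp in
lemma ess_conv (hx : x ∈ Ω) {ε : ℝ} (hε : 0 < ε) :
    ∃ r : ℝ, 0 < r ∧ Metric.ball x r ⊆ Ω ∧
      volume ({y | u y < til Ω u x - ε} ∩ Metric.ball x r) = 0 ∧
      volume ({y | til Ω u x + ε ≤ u y} ∩ Metric.ball x r) = 0 := by
  obtain ⟨hne, hbdd⟩ := S_props hu hx (hloc x hx)
  obtain ⟨r1, hr1, hr1Ω, h1⟩ := mem_S_of_lt_til hne (show til Ω u x - ε < til Ω u x by linarith)
  obtain ⟨r2, hr2, hr2Ω, h2⟩ := null_above_of_gt_til hu hΩo hx hbdd hyp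
    (show til Ω u x < til Ω u x + ε by linarith)
  refine ⟨min r1 r2, lt_min hr1 hr2, (Metric.ball_subset_ball (min_le_left _ _)).trans hr1Ω,
    measure_mono_null (Set.inter_subset_inter_right _
      (Metric.ball_subset_ball (min_le_left _ _))) h1,
    measure_mono_null (Set.inter_subset_inter_right _
      (Metric.ball_subset_ball (min_le_right _ _))) h2⟩

include hu hΩo hloc hyp in
lemma til_continuousOn : ContinuousOn (til Ω u) Ω := by
  rw [Metric.continuousOn_iff]
  intro x hx ε hε
  have hε2 : 0 < ε / 2 := by linarith
  obtain ⟨r, hr, hrΩ, hlo, hhi⟩ := ess_conv hu hΩo hloc hyp hx hε2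
  refine ⟨r / 2, by linarith, fun y hy hdist => ?_⟩
  obtain ⟨hneY, hbddY⟩ := S_props hu hy (hloc y hy)
  have hsub : Metric.ball y (r / 2) ⊆ Metric.ball x r := by
    intro z hz
    rw [Metric.mem_ball] at *
    calc dist z x ≤ dist z y + dist y x := dist_triangle _ _ _
      _ < r / 2 + r / 2 := add_lt_add hz hdist
      _ = r := by ring
  -- lower bound for til y
  have hlowmem : til Ω u x - ε / 2 ∈ S Ω u y :=
    ⟨r / 2, by linarith, hsub.trans hrΩ,
      measure_mono_null (Set.inter_subset_inter_right _ hsub) hlo⟩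
  have hlow : til Ω u x - ε / 2 ≤ til Ω u y := le_csSup hbddY hlowmem
  -- upper bound for til y
  have hupp : til Ω u y ≤ til Ω u x + ε / 2 := by
    refine csSup_le hneY fun s hs => ?_
    by_contra hcon
    push_neg at hcon
    obtain ⟨ρ, hρ, hρΩ, hρ0⟩ := hs
    set ρ' := min ρ (r / 2) with hρ'def
    have hρ' : 0 < ρ' := lt_min hρ (by linarith)
    have hN1 : volume ({z | u z < til Ω u x + ε / 2} ∩ Metric.ball y ρ') = 0 := by
      refine measure_mono_null ?_ hρ0
      rintro z ⟨hz1, hz2⟩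
      exact ⟨lt_trans hz1 hcon, Metric.ball_subset_ball (min_le_left _ _) hz2⟩
    have hsub2 : Metric.ball y ρ' ⊆ Metric.ball x r :=
      (Metric.ball_subset_ball (min_le_right _ _)).trans hsub
    have hN2 : volume ({z | til Ω u x + ε / 2 ≤ u z} ∩ Metric.ball y ρ') = 0 :=
      measure_mono_null (Set.inter_subset_inter_right _ hsub2) hhi
    have hcover : Metric.ball y ρ' ⊆
        ({z | u z < til Ω u x + ε / 2} ∩ Metric.ball y ρ') ∪
        ({z | til Ω u x + ε / 2 ≤ u z} ∩ Metric.ball y ρ') := by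
      intro z hz
      rcases lt_or_ge (u z) (til Ω u x + ε / 2) with h | h
      · exact Or.inl ⟨h, hz⟩
      · exact Or.inr ⟨h, hz⟩
    have : volume (Metric.ball y ρ') = 0 :=
      measure_mono_null hcover (measure_union_null hN1 hN2)
    exact absurd this (Metric.measure_ball_pos volume y hρ').ne'
  rw [Real.dist_eq]
  rw [abs_sub_lt_iff]
  constructor <;> linarith

include hu hΩo hloc hyp in
lemma til_ae_eq : ∀ᵐ x ∂(volume.restrict Ω), til Ω u x = u x := by
  rw [ae_restrict_iff' hΩo.measurableSet]
  rw [ae_iff]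
  have hset : {x | ¬ (x ∈ Ω → til Ω u x = u x)} = {x | x ∈ Ω ∧ til Ω u x ≠ u x} := by
    ext x; simp [_root_.not_imp]
  rw [hset]
  set A : ℚ → Set (EuclideanSpace ℝ (Fin n)) :=
    fun q => {x | x ∈ Ω ∧ u x < (q : ℝ) ∧ (q : ℝ) < til Ω u x} with hA
  set B : ℚ → Set (EuclideanSpace ℝ (Fin n)) :=
    fun q => {x | x ∈ Ω ∧ til Ω u x < (q : ℝ) ∧ (q : ℝ) < u x} with hB
  have hcover : {x | x ∈ Ω ∧ til Ω u x ≠ u x} ⊆ ⋃ q : ℚ, (A q ∪ B q) := by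
    rintro x ⟨hx, hne⟩
    rcases hne.lt_or_gt with h | h
    · obtain ⟨q, hq1, hq2⟩ := exists_rat_btwn h
      exact Set.mem_iUnion.2 ⟨q, Or.inr ⟨hx, hq1, hq2⟩⟩
    · obtain ⟨q, hq1, hq2⟩ := exists_rat_btwn h
      exact Set.mem_iUnion.2 ⟨q, Or.inl ⟨hx, hq1, hq2⟩⟩
  refine measure_mono_null hcover (measure_iUnion_null fun q => measure_union_null ?_ ?_)
  · refine measure_null_of_locally_null _ fun x hx => ?_
    obtain ⟨hxΩ, hx1, hx2⟩ := hx
    obtain ⟨hne, _⟩ := S_props hu hxΩ (hloc x hxΩ)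
    obtain ⟨r, hr, hrΩ, h0⟩ := mem_S_of_lt_til hne hx2
    refine ⟨A q ∩ Metric.ball x r, inter_mem_nhdsWithin _ (Metric.ball_mem_nhds x hr),
      measure_mono_null ?_ h0⟩
    rintro z ⟨⟨_, hz1, _⟩, hz2⟩
    exact ⟨hz1, hz2⟩
  · refine measure_null_of_locally_null _ fun x hx => ?_
    obtain ⟨hxΩ, hx1, hx2⟩ := hx
    obtain ⟨_, hbdd⟩ := S_props hu hxΩ (hloc x hxΩ)
    obtain ⟨r, hr, hrΩ, h0⟩ := null_above_of_gt_til hu hΩo hxΩ hbdd hyp hx1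
    refine ⟨B q ∩ Metric.ball x r, inter_mem_nhdsWithin _ (Metric.ball_mem_nhds x hr),
      measure_mono_null ?_ h0⟩
    rintro z ⟨⟨_, _, hz1⟩, hz2⟩
    exact ⟨hz1.le, hz2⟩
end Main

/-- Forward direction as a `False`-deriving lemma. -/
lemma forward_aux {Ω : Set (EuclideanSpace ℝ (Fin n))} (hΩo : IsOpen Ω)
    {u u₁ : EuclideanSpace ℝ (Fin n) → ℝ} (hc : ContinuousOn u₁ Ω)
    (hae : ∀ᵐ x ∂(volume.restrict Ω), u₁ x = u x) {t τ : ℝ} (htτ : t < τ)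
    {x : EuclideanSpace ℝ (Fin n)}
    (hb1 : x ∈ mtBoundary n {x ∈ Ω | t ≤ u x})
    (hb2 : x ∈ mtBoundary n {x ∈ Ω | τ ≤ u x}) (hx : x ∈ Ω) : False := by
  have hN : volume {y | y ∈ Ω ∧ u₁ y ≠ u y} = 0 := by
    have h1 := (ae_restrict_iff' hΩo.measurableSet).1 hae
    have := ae_iff.1 h1
    convert this using 2
    ext y; simp [_root_.not_imp]
  rcases lt_or_ge t (u₁ x) with h | h
  · -- u₁ > t on a neighborhood; contradicts upper bound in hb1
    have hev : ∀ᶠ y in nhds x, t < u₁ y := by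
      have := (hc x hx).tendsto
      rw [hΩo.nhdsWithin_eq hx] at this
      exact this.eventually (eventually_gt_nhds h)
    obtain ⟨δ0, hδ0, hδball⟩ := Metric.eventually_nhds_iff_ball.1 hev
    obtain ⟨δ1, hδ1, hδ1Ω⟩ := Metric.isOpen_iff.1 hΩo x hx
    set δ := min δ0 δ1 with hδdef
    have hδ : 0 < δ := lt_min hδ0 hδ1
    have hsub : Metric.ball x δ ⊆ {y ∈ Ω | t ≤ u y} ∪ {y | y ∈ Ω ∧ u₁ y ≠ u y} := by
      intro y hy
      have hyΩ : y ∈ Ω := hδ1Ω (Metric.ball_subset_ball (min_le_right _ _) hy)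
      by_cases hcase : u₁ y = u y
      · refine Or.inl ⟨hyΩ, ?_⟩
        have := hδball y (Metric.ball_subset_ball (min_le_left _ _) hy)
        rw [hcase] at this
        exact this.le
      · exact Or.inr ⟨hyΩ, hcase⟩
    have hball : volume (Metric.ball x δ) ≤ volume ({y ∈ Ω | t ≤ u y} ∩ Metric.ball x δ) := by
      calc volume (Metric.ball x δ)
          = volume (Metric.ball x δ ∩ Metric.ball x δ) := by rw [Set.inter_self]
        _ ≤ volume (({y ∈ Ω | t ≤ u y} ∪ {y | y ∈ Ω ∧ u₁ y ≠ u y}) ∩ Metric.ball x δ) := by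
            exact measure_mono (Set.inter_subset_inter_left _ hsub)
        _ = volume (({y ∈ Ω | t ≤ u y} ∩ Metric.ball x δ) ∪
              ({y | y ∈ Ω ∧ u₁ y ≠ u y} ∩ Metric.ball x δ)) := by rw [Set.union_inter_distrib_right]
        _ ≤ volume ({y ∈ Ω | t ≤ u y} ∩ Metric.ball x δ) +
              volume ({y | y ∈ Ω ∧ u₁ y ≠ u y} ∩ Metric.ball x δ) := measure_union_le _ _
        _ = volume ({y ∈ Ω | t ≤ u y} ∩ Metric.ball x δ) := by
            rw [measure_mono_null Set.inter_subset_left hN, add_zero]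
    exact absurd hball (not_le.2 ((hb1 δ hδ).2))
  · -- u₁ x ≤ t < τ : u₁ < τ near x; contradicts positivity in hb2
    have hev : ∀ᶠ y in nhds x, u₁ y < τ := by
      have := (hc x hx).tendsto
      rw [hΩo.nhdsWithin_eq hx] at this
      exact this.eventually (eventually_lt_nhds (lt_of_le_of_lt h htτ))
    obtain ⟨δ0, hδ0, hδball⟩ := Metric.eventually_nhds_iff_ball.1 hev
    have hsub : {y ∈ Ω | τ ≤ u y} ∩ Metric.ball x δ0 ⊆ {y | y ∈ Ω ∧ u₁ y ≠ u y} := by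
      rintro y ⟨⟨hyΩ, hyτ⟩, hyb⟩
      refine ⟨hyΩ, fun hcase => ?_⟩
      have := hδball y hyb
      rw [hcase] at this
      exact absurd hyτ (not_le.2 this)
    have : volume ({y ∈ Ω | τ ≤ u y} ∩ Metric.ball x δ0) = 0 := measure_mono_null hsub hN
    exact absurd this (hb2 δ0 hδ0).1.ne'

end MtAux

theorem continuous_iff_level_set_boundaries_disjoint (n : ℕ) (hn : 0 < n)
    (Ω : Set (EuclideanSpace ℝ (Fin n))) (hΩo : IsOpen Ω) (hΩb : Bornology.IsBounded Ω)
    (u : EuclideanSpace ℝ (Fin n) → ℝ) (hu : Measurable u)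
    (hloc : ∀ x ∈ Ω, ∃ r : ℝ, 0 < r ∧ Metric.ball x r ⊆ Ω ∧
      ∃ M : ℝ, ∀ᵐ y ∂(volume.restrict (Metric.ball x r)), |u y| ≤ M) :
    (∃ u₁ : EuclideanSpace ℝ (Fin n) → ℝ, ContinuousOn u₁ Ω ∧
        ∀ᵐ x ∂(volume.restrict Ω), u₁ x = u x) ↔
      ∀ t τ : ℝ, t ≠ τ →
        mtBoundary n {x ∈ Ω | t ≤ u x} ∩ mtBoundary n {x ∈ Ω | τ ≤ u x} ∩ Ω = ∅ := by
  constructor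
  · rintro ⟨u₁, hc, hae⟩ t τ hne
    rw [Set.eq_empty_iff_forall_notMem]
    rintro x ⟨⟨hb1, hb2⟩, hx⟩
    rcases hne.lt_or_gt with h | h
    · exact MtAux.forward_aux hΩo hc hae h hb1 hb2 hx
    · exact MtAux.forward_aux hΩo hc hae h hb2 hb1 hx
  · intro hyp
    exact ⟨MtAux.til Ω u, MtAux.til_continuousOn hu hΩo hloc hyp,
      MtAux.til_ae_eq hu hΩo hloc hyp⟩

end
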